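/- Let T be a rooted tree in which, at each node u, for each document d ∈ D there is an N-entry for d at u if and only if either u is a leaf labeled d, or u is internal and at least two children of u have a leaf labeled d in their subtree. Then the total number of N-entries over all nodes of T is at most 2n, where n is the number of leaves. -/

import Mathlib

/-- A finite rooted tree, given by a parent function, a depth function and an LCA
operation satisfying the usual specifications.  `parent root = root`, and every node
reaches the root by iterating `parent` (guaranteed by the depth axioms). -/
structure RTree (V : Type*) where
  root : V
  parent : V → V
  lca : V → V → V
  depth : V → ℕ
  parent_root : parent root = root
  depth_eq_zero_iff : ∀ v, depth v = 0 ↔ v = root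
  depth_parent : ∀ v, v ≠ root → depth (parent v) + 1 = depth v
  lca_anc_left : ∀ u v, ∃ k, parent^[k] u = lca u v
  lca_anc_right : ∀ u v, ∃ k, parent^[k] v = lca u v
  lca_greatest : ∀ u v w, (∃ k, parent^[k] u = w) → (∃ k, parent^[k] v = w) →
    ∃ k, parent^[k] (lca u v) = w

namespace RTree

variable {V : Type*} (T : RTree V)

/-- `u` is an ancestor of `v` (possibly `u = v`). -/
def Anc (u v : V) : Prop := ∃ k, T.parent^[k] v = u

/-- `u` is a proper (strict) ancestor of `v`. -/
def ProperAnc (u v : V) : Prop := T.Anc u v ∧ u ≠ v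

/-- `c` is a child of `u`. -/
def IsChild (c u : V) : Prop := T.parent c = u ∧ c ≠ u

/-- A leaf is a node without children. -/
def IsLeaf (v : V) : Prop := ∀ c, ¬ T.IsChild c v

end RTree

namespace RTree

variable {V : Type*} (T : RTree V)

lemma anc_rfl (v : V) : T.Anc v v := ⟨0, rfl⟩

lemma anc_trans {u v w : V} (h1 : T.Anc u v) (h2 : T.Anc w u) : T.Anc w v := by
  obtain ⟨i, hi⟩ := h1; obtain ⟨j, hj⟩ := h2
  exact ⟨j + i, by rw [Function.iterate_add_apply, hi, hj]⟩

lemma iterate_root (k : ℕ) : T.parent^[k] T.root = T.root :=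
  Function.iterate_fixed T.parent_root k

lemma depth_parent_le (v : V) : T.depth (T.parent v) ≤ T.depth v := by
  by_cases h : v = T.root
  · subst h; rw [T.parent_root]
  · have := T.depth_parent v h; omega

lemma depth_iterate_le (k : ℕ) (v : V) : T.depth (T.parent^[k] v) ≤ T.depth v := by
  induction k with
  | zero => simp
  | succ k ih =>
      rw [Function.iterate_succ_apply']
      exact le_trans (T.depth_parent_le _) ih

lemma anc_depth_le {u v : V} (h : T.Anc u v) : T.depth u ≤ T.depth v := by
  obtain ⟨k, hk⟩ := h; rw [← hk]; exact T.depth_iterate_le k v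

lemma anc_depth_lt {u v : V} (h : T.Anc u v) (hne : u ≠ v) : T.depth u < T.depth v := by
  obtain ⟨k, hk⟩ := h
  cases k with
  | zero => simp at hk; exact absurd hk.symm hne
  | succ k =>
      by_cases hv : v = T.root
      · subst hv; rw [T.iterate_root] at hk; exact absurd hk.symm hne
      · have hd := T.depth_parent v hv
        have h2 : T.depth (T.parent^[k + 1] v) ≤ T.depth (T.parent v) := by
          rw [Function.iterate_succ_apply]; exact T.depth_iterate_le k _
        rw [hk] at h2; omega

lemma anc_antisymm {u v : V} (h1 : T.Anc u v) (h2 : T.Anc v u) : u = v := by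
  by_contra hne
  have a := T.anc_depth_lt h1 hne
  have b := T.anc_depth_lt h2 (Ne.symm hne)
  omega

lemma anc_comparable {u v l : V} (h1 : T.Anc u l) (h2 : T.Anc v l) :
    T.Anc u v ∨ T.Anc v u := by
  obtain ⟨i, hi⟩ := h1; obtain ⟨j, hj⟩ := h2
  rcases le_total i j with h | h
  · right
    refine ⟨j - i, ?_⟩
    rw [← hi, ← Function.iterate_add_apply, show j - i + i = j from by omega]; exact hj
  · left
    refine ⟨i - j, ?_⟩
    rw [← hj, ← Function.iterate_add_apply, show i - j + j = i from by omega]; exact hi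

lemma anc_of_anc_of_depth_le {u v l : V} (h1 : T.Anc u l) (h2 : T.Anc v l)
    (hd : T.depth u ≤ T.depth v) : T.Anc u v := by
  rcases T.anc_comparable h1 h2 with h | h
  · exact h
  · have : v = u := by
      by_contra hne
      exact absurd hd (by have := T.anc_depth_lt h hne; omega)
    subst this; exact T.anc_rfl v

lemma child_ne_root {c u : V} (h : T.IsChild c u) : c ≠ T.root := by
  intro hc; subst hc
  exact h.2 (by rw [← h.1, T.parent_root])

lemma depth_child {c u : V} (h : T.IsChild c u) : T.depth c = T.depth u + 1 := by
  have := T.depth_parent c (T.child_ne_root h)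
  rw [h.1] at this; omega

lemma anc_of_child {c u : V} (h : T.IsChild c u) : T.Anc u c := ⟨1, by simpa using h.1⟩

lemma exists_child_anc_aux : ∀ (k : ℕ) (l w : V), T.parent^[k] l = w → l ≠ w →
    ∃ c, T.IsChild c w ∧ T.Anc c l := by
  intro k
  induction k with
  | zero => intro l w h hne; exact absurd h hne
  | succ k ih =>
      intro l w h hne
      rw [Function.iterate_succ_apply'] at h
      by_cases hcw : T.parent^[k] l = w
      · exact ih l w hcw hne
      · exact ⟨T.parent^[k] l, ⟨h, hcw⟩, ⟨k, rfl⟩⟩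

lemma exists_child_anc {w l : V} (h : T.Anc w l) (hne : l ≠ w) :
    ∃ c, T.IsChild c w ∧ T.Anc c l := by
  obtain ⟨k, hk⟩ := h; exact T.exists_child_anc_aux k l w hk hne

lemma child_anc_unique {w c c' l : V} (hc : T.IsChild c w) (hc' : T.IsChild c' w)
    (h : T.Anc c l) (h' : T.Anc c' l) : c = c' := by
  by_contra hne
  rcases T.anc_comparable h h' with hh | hh
  · have := T.anc_depth_lt hh hne
    rw [T.depth_child hc, T.depth_child hc'] at this; omega
  · have := T.anc_depth_lt hh (Ne.symm hne)
    rw [T.depth_child hc, T.depth_child hc'] at this; omega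

end RTree

section Counting

open scoped Classical

variable {V D : Type*} [Fintype V] [LinearOrder V] (T : RTree V) (doc : V → D)

/-- The `d`-labeled leaves in the subtree of `v`. -/
noncomputable def subLeaves (d : D) (v : V) : Finset V :=
  Finset.univ.filter fun l => T.IsLeaf l ∧ doc l = d ∧ T.Anc v l

omit [LinearOrder V] in
lemma mem_subLeaves {d : D} {v l : V} :
    l ∈ subLeaves T doc d v ↔ T.IsLeaf l ∧ doc l = d ∧ T.Anc v l := by
  simp [subLeaves]

/-- An internal N-entry. -/
def IntEntry (d : D) (w : V) : Prop :=
  ¬ T.IsLeaf w ∧ ∃ c₁ c₂, T.IsChild c₁ w ∧ T.IsChild c₂ w ∧ c₁ ≠ c₂ ∧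
    (∃ lf, T.IsLeaf lf ∧ doc lf = d ∧ T.Anc c₁ lf) ∧
    (∃ lf, T.IsLeaf lf ∧ doc lf = d ∧ T.Anc c₂ lf)

/-- Specification of the leaf charged to an internal N-entry `(w, d)`:  `l` is the
maximum `d`-leaf below a child `c` of `w` that avoids the maximum `d`-leaf below `w`. -/
def GSpec (d : D) (w l : V) : Prop :=
  T.IsLeaf l ∧ doc l = d ∧ ∃ c, T.IsChild c w ∧ T.Anc c l ∧
    (∀ l' ∈ subLeaves T doc d c, l' ≤ l) ∧
    ∀ m ∈ subLeaves T doc d w, (∀ l' ∈ subLeaves T doc d w, l' ≤ m) → ¬ T.Anc c m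

noncomputable def gLeaf (d : D) (w : V) : V :=
  if h : ∃ l, GSpec T doc d w l then h.choose else w

lemma gSpec_gLeaf {d : D} {w : V} (h : ∃ l, GSpec T doc d w l) :
    GSpec T doc d w (gLeaf T doc d w) := by
  rw [gLeaf, dif_pos h]; exact h.choose_spec

lemma exists_gSpec {d : D} {w : V} (h : IntEntry T doc d w) : ∃ l, GSpec T doc d w l := by
  obtain ⟨hw, c₁, c₂, hc₁, hc₂, hcc, ⟨l₁, hl₁, hd₁, ha₁⟩, ⟨l₂, hl₂, hd₂, ha₂⟩⟩ := h
  have hne1 : (subLeaves T doc d w).Nonempty :=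
    ⟨l₁, (mem_subLeaves T doc).2 ⟨hl₁, hd₁, T.anc_trans ha₁ (T.anc_of_child hc₁)⟩⟩
  obtain ⟨M, hMmemW, hMub⟩ : ∃ M, M ∈ subLeaves T doc d w ∧ ∀ l' ∈ subLeaves T doc d w, l' ≤ M :=
    ⟨(subLeaves T doc d w).max' hne1, (subLeaves T doc d w).max'_mem hne1,
      fun l' hl' => Finset.le_max' _ _ hl'⟩
  obtain ⟨hMleaf, hMdoc, hMAnc⟩ := (mem_subLeaves T doc).1 hMmemW
  have hMne : M ≠ w := by rintro rfl; exact hw hMleaf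
  obtain ⟨cm, hcm, hcmM⟩ := T.exists_child_anc hMAnc hMne
  -- pick c ∈ {c₁, c₂} with c ≠ cm, together with a d-leaf below it
  have key : ∀ c l₀, T.IsChild c w → c ≠ cm → T.IsLeaf l₀ → doc l₀ = d → T.Anc c l₀ →
      ∃ l, GSpec T doc d w l := by
    intro c l₀ hc hccm hl₀ hd₀ ha₀
    have hne0 : (subLeaves T doc d c).Nonempty := ⟨l₀, (mem_subLeaves T doc).2 ⟨hl₀, hd₀, ha₀⟩⟩
    refine ⟨(subLeaves T doc d c).max' hne0, ?_⟩
    have hmem := (subLeaves T doc d c).max'_mem hne0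
    rw [mem_subLeaves] at hmem
    refine ⟨hmem.1, hmem.2.1, c, hc, hmem.2.2, fun l' hl' => Finset.le_max' _ _ hl', ?_⟩
    intro m hm hmax hanc
    have hmM : m = M := le_antisymm (hMub m hm) (hmax M hMmemW)
    subst hmM
    exact hccm (T.child_anc_unique hc hcm hanc hcmM)
  by_cases h12 : c₁ = cm
  · exact key c₂ l₂ hc₂ (fun h => hcc (h12.trans h.symm)) hl₂ hd₂ ha₂
  · exact key c₁ l₁ hc₁ h12 hl₁ hd₁ ha₁

lemma gLeaf_inj_aux {d : D} {w w' : V} (h : IntEntry T doc d w) (h' : IntEntry T doc d w')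
    (hne : w' ≠ w) (hanc : T.Anc w' w) (heq : gLeaf T doc d w = gLeaf T doc d w') :
    False := by
  obtain ⟨hl, hd, c, hc, hcl, hcmax, hcM⟩ := gSpec_gLeaf T doc (exists_gSpec T doc h)
  obtain ⟨hl', hd', c', hc', hc'l, hc'max, hc'M⟩ := gSpec_gLeaf T doc (exists_gSpec T doc h')
  set l := gLeaf T doc d w with hldef
  rw [← heq] at hc'l hc'max
  have hwl : T.Anc w l := T.anc_trans hcl (T.anc_of_child hc)
  have hdww' : T.depth w' < T.depth w := T.anc_depth_lt hanc hne
  have hc'w : T.Anc c' w := by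
    refine T.anc_of_anc_of_depth_le hc'l hwl ?_
    rw [T.depth_child hc']; omega
  have hlw : l ∈ subLeaves T doc d w := (mem_subLeaves T doc).2 ⟨hl, hd, hwl⟩
  have hneW : (subLeaves T doc d w).Nonempty := ⟨l, hlw⟩
  obtain ⟨M, hMmem, hMub⟩ : ∃ M, M ∈ subLeaves T doc d w ∧ ∀ l' ∈ subLeaves T doc d w, l' ≤ M :=
    ⟨(subLeaves T doc d w).max' hneW, (subLeaves T doc d w).max'_mem hneW,
      fun l' hl' => Finset.le_max' _ _ hl'⟩
  have hMmem' := (mem_subLeaves T doc).1 hMmem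
  have hc'Manc : T.Anc c' M := T.anc_trans hMmem'.2.2 hc'w
  have hMle : M ≤ l := hc'max M ((mem_subLeaves T doc).2 ⟨hMmem'.1, hMmem'.2.1, hc'Manc⟩)
  have hlle : l ≤ M := hMub l hlw
  have hlM : l = M := le_antisymm hlle hMle
  exact hcM M hMmem hMub (hlM ▸ hcl)

lemma gLeaf_inj {d : D} {w w' : V} (h : IntEntry T doc d w) (h' : IntEntry T doc d w')
    (heq : gLeaf T doc d w = gLeaf T doc d w') : w = w' := by
  by_contra hne
  obtain ⟨hlf, hdoc, c, hc, hcl, -⟩ := gSpec_gLeaf T doc (exists_gSpec T doc h)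
  obtain ⟨hlf', hdoc', c', hc', hc'l, -⟩ := gSpec_gLeaf T doc (exists_gSpec T doc h')
  rw [← heq] at hc'l
  have hwl : T.Anc w (gLeaf T doc d w) := T.anc_trans hcl (T.anc_of_child hc)
  have hw'l : T.Anc w' (gLeaf T doc d w) := T.anc_trans hc'l (T.anc_of_child hc')
  rcases T.anc_comparable hwl hw'l with hh | hh
  · exact gLeaf_inj_aux T doc h' h hne (by exact hh) heq.symm
  · exact gLeaf_inj_aux T doc h h' (Ne.symm hne) hh heq

end Counting

/-- Node `w` has an N-entry for document `d`: either `w` is a leaf labeled `d`, or `w`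
is internal and at least two (distinct) children of `w` contain a leaf labeled `d` in
their subtrees. -/
def HasNEntry {V D : Type*} (T : RTree V) (doc : V → D) (d : D) (w : V) : Prop :=
  (T.IsLeaf w ∧ doc w = d) ∨
  (¬ T.IsLeaf w ∧ ∃ c₁ c₂, T.IsChild c₁ w ∧ T.IsChild c₂ w ∧ c₁ ≠ c₂ ∧
    (∃ lf, T.IsLeaf lf ∧ doc lf = d ∧ T.Anc c₁ lf) ∧
    (∃ lf, T.IsLeaf lf ∧ doc lf = d ∧ T.Anc c₂ lf))

/-- The total number of N-entries over all nodes of a rooted tree is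
at most `2 n`, where `n` is the number of leaves. -/
theorem total_NEntries_le {V D : Type*} [Fintype V] (T : RTree V) (doc : V → D) :
    ∑ w : V, {d : D | HasNEntry T doc d w}.ncard ≤ 2 * {v : V | T.IsLeaf v}.ncard := by
  classical
  letI : LinearOrder V :=
    LinearOrder.lift' (Fintype.equivFin V) (Fintype.equivFin V).injective
  set f : V → D → V := fun w d => if T.IsLeaf w then w else gLeaf T doc d w with hf
  have hint : ∀ w d, HasNEntry T doc d w → ¬ T.IsLeaf w → IntEntry T doc d w := by
    intro w d h hw
    rcases h with ⟨h1, _⟩ | h2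
    · exact absurd h1 hw
    · exact h2
  have hfmem : ∀ w d, HasNEntry T doc d w → T.IsLeaf (f w d) ∧ doc (f w d) = d := by
    intro w d h
    by_cases hw : T.IsLeaf w
    · rcases h with ⟨_, hd⟩ | ⟨hnl, _⟩
      · simp only [hf, if_pos hw]; exact ⟨hw, hd⟩
      · exact absurd hw hnl
    · have hspec := gSpec_gLeaf T doc (exists_gSpec T doc (hint w d h hw))
      simp only [hf, if_neg hw]
      exact ⟨hspec.1, hspec.2.1⟩
  set B : V → Finset V :=
    fun w => Finset.univ.filter (fun l => ∃ d, HasNEntry T doc d w ∧ f w d = l) with hB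
  have hcard : ∀ w : V, {d : D | HasNEntry T doc d w}.ncard = (B w).card := by
    intro w
    have hinj : Set.InjOn (f w) {d : D | HasNEntry T doc d w} := by
      intro d hd d' hd' heq
      rw [← (hfmem w d hd).2, ← (hfmem w d' hd').2, heq]
    rw [← Set.ncard_image_of_injOn hinj]
    have himg : f w '' {d : D | HasNEntry T doc d w} = ↑(B w) := by
      ext l
      simp only [Set.mem_image, Set.mem_setOf_eq, hB, Finset.coe_filter,
        Finset.mem_univ, true_and, Set.mem_setOf_eq]
    rw [himg, Set.ncard_coe_finset]
  set L : Finset V := Finset.univ.filter T.IsLeaf with hL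
  have hLn : {v | T.IsLeaf v}.ncard = L.card := by
    rw [← Set.ncard_coe_finset]
    congr 1
    ext v; simp [hL]
  set s : Finset (V × V) := Finset.univ.filter (fun p => p.2 ∈ B p.1) with hs
  have h1 : s.card = ∑ w : V, (B w).card := by
    rw [Finset.card_eq_sum_card_fiberwise
      (f := Prod.fst) (t := Finset.univ) (fun p _ => Finset.mem_univ p.1)]
    refine Finset.sum_congr rfl fun w _ => ?_
    refine Finset.card_bij (fun p _ => p.2) ?_ ?_ ?_
    · intro p hp
      show p.2 ∈ B w
      simp only [hs, Finset.mem_filter, Finset.mem_univ, true_and] at hp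
      rw [← hp.2]; exact hp.1
    · intro p hp q hq h
      simp only [hs, Finset.mem_filter, Finset.mem_univ, true_and] at hp hq
      exact Prod.ext (hp.2.trans hq.2.symm) h
    · intro l hl
      refine ⟨(w, l), ?_, rfl⟩
      simp only [hs, Finset.mem_filter, Finset.mem_univ, true_and]
      exact ⟨hl, trivial⟩
  have h2 : s.card ≤ (L ×ˢ (Finset.univ : Finset Bool)).card := by
    apply Finset.card_le_card_of_injOn (fun p => (p.2, decide (T.IsLeaf p.1)))
    · intro p hp
      simp only [hs, hB, Finset.mem_coe, Finset.mem_filter, Finset.mem_univ, true_and] at hp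
      obtain ⟨d, hd, hfd⟩ := hp
      have hlm := (hfmem p.1 d hd).1
      rw [hfd] at hlm
      simp [hL, Finset.mem_product, hlm]
      exact em _
    · intro p hp q hq h
      simp only [hs, hB, Finset.mem_coe, Finset.mem_filter, Finset.mem_univ,
        true_and] at hp hq
      obtain ⟨d, hd, hfd⟩ := hp
      obtain ⟨e, he, hfe⟩ := hq
      have hp2 : p.2 = q.2 := congrArg Prod.fst h
      have hleaf : T.IsLeaf p.1 ↔ T.IsLeaf q.1 := by
        have := congrArg Prod.snd h
        simpa using this
      have hdp : doc p.2 = d := by rw [← hfd]; exact (hfmem p.1 d hd).2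
      have heq2 : doc q.2 = e := by rw [← hfe]; exact (hfmem q.1 e he).2
      have hde : d = e := by rw [← hdp, ← heq2, hp2]
      subst hde
      by_cases hl : T.IsLeaf p.1
      · have hl' : T.IsLeaf q.1 := hleaf.1 hl
        have e1 : p.1 = p.2 := by rw [← hfd]; simp only [hf, if_pos hl]
        have e2 : q.1 = q.2 := by rw [← hfe]; simp only [hf, if_pos hl']
        exact Prod.ext (by rw [e1, e2, hp2]) hp2
      · have hl' : ¬ T.IsLeaf q.1 := fun hx => hl (hleaf.2 hx)
        have e1 : gLeaf T doc d p.1 = p.2 := by rw [← hfd]; simp only [hf, if_neg hl]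
        have e2 : gLeaf T doc d q.1 = q.2 := by rw [← hfe]; simp only [hf, if_neg hl']
        have := gLeaf_inj T doc (hint p.1 d hd hl) (hint q.1 d he hl')
          (e1.trans (hp2.trans e2.symm))
        exact Prod.ext this hp2
  have h3 : (L ×ˢ (Finset.univ : Finset Bool)).card = 2 * L.card := by
    rw [Finset.card_product, Finset.card_univ, Fintype.card_bool]
    ring
  calc ∑ w : V, {d : D | HasNEntry T doc d w}.ncard
      = ∑ w : V, (B w).card := Finset.sum_congr rfl (fun w _ => hcard w)
    _ = s.card := h1.symm
    _ ≤ (L ×ˢ (Finset.univ : Finset Bool)).card := h2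
    _ = 2 * L.card := h3
    _ = 2 * {v | T.IsLeaf v}.ncard := by rw [hLn]
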